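/- Let P1 and P2 be disjoint sets of vertices with c1 ∈ P1 and c2 ∈ P2, let S = S(P1, P2, c1, c2) be the binary star graph, and let w ∈ P2 \ {c2}. Then τ_w(τ_{c1}(τ_w(S)) − c1) is the simple graph whose edges are exactly the pairs {c2, u} with u ∈ P1 \ {c1} together with the pairs {w, z} with z ∈ P2 \ {w}. -/

import Mathlib

open SimpleGraph

universe u

/-- Local complementation of `G` at vertex `i`: adjacency is toggled exactly among
pairs of neighbors of `i`. -/
def localComp {V : Type u} (G : SimpleGraph V) (i : V) : SimpleGraph V where
  Adj a b := a ≠ b ∧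
    ((G.Adj i a ∧ G.Adj i b) ∧ ¬ G.Adj a b ∨ ¬(G.Adj i a ∧ G.Adj i b) ∧ G.Adj a b)
  symm := by
    constructor
    rintro a b ⟨hne, h⟩
    refine ⟨hne.symm, ?_⟩
    rcases h with ⟨⟨ha, hb⟩, hab⟩ | ⟨h1, h2⟩
    · exact Or.inl ⟨⟨hb, ha⟩, fun h => hab h.symm⟩
    · exact Or.inr ⟨fun h => h1 ⟨h.2, h.1⟩, h2.symm⟩
  loopless := ⟨fun a h => h.1 rfl⟩

/-- Vertex deletion `G − i`: remove every edge incident to `i` (the vertex stays,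
isolated). -/
def delVert {V : Type u} (G : SimpleGraph V) (i : V) : SimpleGraph V where
  Adj a b := G.Adj a b ∧ a ≠ i ∧ b ≠ i
  symm := ⟨fun _ _ ⟨h, ha, hb⟩ => ⟨h.symm, hb, ha⟩⟩
  loopless := ⟨fun a h => G.irrefl h.1⟩

/-- Deletion of a set `Z` of vertices: remove every edge incident to a vertex of `Z`. -/
def delSet {V : Type u} (G : SimpleGraph V) (Z : Set V) : SimpleGraph V where
  Adj a b := G.Adj a b ∧ a ∉ Z ∧ b ∉ Z
  symm := ⟨fun _ _ ⟨h, ha, hb⟩ => ⟨h.symm, hb, ha⟩⟩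
  loopless := ⟨fun a h => G.irrefl h.1⟩

/-- Star graph on the set `W` with center `c`: edges are exactly the pairs `{c, u}`
for `u ∈ W \ {c}`. -/
def starGraph {V : Type u} (W : Set V) (c : V) : SimpleGraph V :=
  SimpleGraph.fromRel (fun a b => a = c ∧ b ∈ W \ {c})

/-- Complete graph on the set `A`: edges are exactly all pairs of distinct elements
of `A`. -/
def completeOn {V : Type u} (A : Set V) : SimpleGraph V :=
  SimpleGraph.fromRel (fun a b => a ∈ A ∧ b ∈ A)

/-- Complete bipartite graph on parts `A` and `B`: edges are exactly the pairs
`{a, b}` with `a ∈ A` and `b ∈ B`. -/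
def completeBipartiteOn {V : Type u} (A B : Set V) : SimpleGraph V :=
  SimpleGraph.fromRel (fun a b => a ∈ A ∧ b ∈ B)

/-- Binary star graph `S(P1, P2, c1, c2)`: edges are exactly the pairs `{c1, u}`
with `u ∈ P2` together with the pairs `{u, c2}` with `u ∈ P1`. -/
def binaryStar {V : Type u} (P1 P2 : Set V) (c1 c2 : V) : SimpleGraph V :=
  SimpleGraph.fromRel (fun a b => (a = c1 ∧ b ∈ P2) ∨ (a ∈ P1 ∧ b = c2))

/-- The graph with the single edge `{c1, c2}`. -/
def singleEdge {V : Type u} (c1 c2 : V) : SimpleGraph V :=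
  SimpleGraph.fromRel (fun a b => a = c1 ∧ b = c2)

/-
`w` is a leaf of `S` hanging from `c1`, so `τ_w` fixes `S`. The neighbourhood `P2` of `c1` is
independent, so `τ_{c1}` adds the complete graph on `P2`. After deleting `c1`, the neighbourhood
of `w` is the clique `P2 \ {w}`, so the last `τ_w` erases exactly that clique: of the complete
graph on `P2` only the star at `w` survives, and the edges from `c2` to `P1 \ {c1}` are untouched.
-/

namespace SimpleGraph

variable {V : Type u}

@[simp]
lemma localComp_adj (G : SimpleGraph V) (i a b : V) :
    (localComp G i).Adj a b ↔ a ≠ b ∧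
      ((G.Adj i a ∧ G.Adj i b) ∧ ¬ G.Adj a b ∨ ¬(G.Adj i a ∧ G.Adj i b) ∧ G.Adj a b) :=
  Iff.rfl

@[simp]
lemma delVert_adj (G : SimpleGraph V) (i a b : V) :
    (delVert G i).Adj a b ↔ G.Adj a b ∧ a ≠ i ∧ b ≠ i :=
  Iff.rfl

lemma completeOn_adj (A : Set V) (a b : V) :
    (completeOn A).Adj a b ↔ a ≠ b ∧ a ∈ A ∧ b ∈ A := by
  simp only [completeOn, fromRel_adj]
  tauto

lemma binaryStar_adj (P1 P2 : Set V) (c1 c2 a b : V) :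
    (binaryStar P1 P2 c1 c2).Adj a b ↔ a ≠ b ∧
      (a = c1 ∧ b ∈ P2 ∨ b = c1 ∧ a ∈ P2 ∨ a ∈ P1 ∧ b = c2 ∨ b ∈ P1 ∧ a = c2) := by
  simp only [binaryStar, fromRel_adj]
  tauto

lemma localComp_eq_sup_of_isIndepSet {G : SimpleGraph V} {i : V}
    (h : G.IsIndepSet (G.neighborSet i)) :
    localComp G i = G ⊔ completeOn (G.neighborSet i) := by
  ext a b
  have hindep : G.Adj i a → G.Adj i b → ¬ G.Adj a b := fun ha hb hab => h ha hb hab.ne hab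
  have hne := G.ne_of_adj (a := a) (b := b)
  simp only [localComp_adj, sup_adj, completeOn_adj, mem_neighborSet]
  tauto

lemma localComp_eq_sdiff_of_isClique {G : SimpleGraph V} {i : V}
    (h : G.IsClique (G.neighborSet i)) :
    localComp G i = G \ completeOn (G.neighborSet i) := by
  ext a b
  have hclique : G.Adj i a → G.Adj i b → a ≠ b → G.Adj a b := fun ha hb hab => h ha hb hab
  have hne := G.ne_of_adj (a := a) (b := b)
  simp only [localComp_adj, sdiff_adj, completeOn_adj, mem_neighborSet]
  tauto

lemma localComp_eq_self_of_subsingleton {G : SimpleGraph V} {i : V}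
    (h : (G.neighborSet i).Subsingleton) : localComp G i = G := by
  rw [localComp_eq_sup_of_isIndepSet (fun a ha b hb hab _ => hab (h ha hb)), sup_eq_left]
  intro a b hab
  rw [completeOn_adj] at hab
  exact absurd (h hab.2.1 hab.2.2) hab.1

lemma neighborSet_delVert (G : SimpleGraph V) {i v : V} (hv : v ≠ i) :
    (delVert G i).neighborSet v = G.neighborSet v \ {i} := by
  ext x
  simp [hv]

lemma IsClique.delVert {G : SimpleGraph V} {s : Set V} (h : G.IsClique s) {i : V} (hi : i ∉ s) :
    (delVert G i).IsClique s :=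
  fun _ ha _ hb hab => ⟨h ha hb hab, ne_of_mem_of_not_mem ha hi, ne_of_mem_of_not_mem hb hi⟩

lemma neighborSet_completeOn {A : Set V} {v : V} (hv : v ∈ A) :
    (completeOn A).neighborSet v = A \ {v} := by
  ext x
  simp [completeOn_adj, hv, ne_comm, and_comm]

lemma isClique_completeOn (A : Set V) : (completeOn A).IsClique A :=
  fun a ha b hb hab => (completeOn_adj A a b).2 ⟨hab, ha, hb⟩

section binaryStar

variable {P1 P2 : Set V} {c1 c2 : V}

lemma neighborSet_binaryStar_left_center (hc1 : c1 ∉ P2) (hc2 : c2 ∈ P2) :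
    (binaryStar P1 P2 c1 c2).neighborSet c1 = P2 := by
  ext x
  rw [mem_neighborSet, binaryStar_adj]
  constructor
  · rintro ⟨hne, ⟨-, hx⟩ | ⟨rfl, -⟩ | ⟨-, rfl⟩ | ⟨-, rfl⟩⟩
    exacts [hx, absurd rfl hne, hc2, absurd hc2 hc1]
  · intro hx
    exact ⟨(ne_of_mem_of_not_mem hx hc1).symm, Or.inl ⟨rfl, hx⟩⟩

lemma neighborSet_binaryStar_of_mem_right {w : V} (hw : w ∈ P2) (hwP1 : w ∉ P1)
    (hwc1 : w ≠ c1) (hwc2 : w ≠ c2) :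
    (binaryStar P1 P2 c1 c2).neighborSet w = {c1} := by
  ext x
  rw [mem_neighborSet, binaryStar_adj, Set.mem_singleton_iff]
  constructor
  · rintro ⟨-, ⟨rfl, -⟩ | ⟨rfl, -⟩ | ⟨h, -⟩ | ⟨-, rfl⟩⟩ <;> simp_all
  · rintro rfl
    exact ⟨hwc1, Or.inr (Or.inl ⟨rfl, hw⟩)⟩

lemma isIndepSet_binaryStar_right (hdisj : Disjoint P1 P2) (hc1 : c1 ∉ P2) :
    (binaryStar P1 P2 c1 c2).IsIndepSet P2 := by
  intro a ha b hb _ hab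
  rcases (binaryStar_adj P1 P2 c1 c2 a b).1 hab with ⟨-, ⟨rfl, -⟩ | ⟨rfl, -⟩ | ⟨h, -⟩ | ⟨h, -⟩⟩
  · exact hc1 ha
  · exact hc1 hb
  · exact Set.disjoint_left.1 hdisj h ha
  · exact Set.disjoint_left.1 hdisj h hb

end binaryStar

end SimpleGraph

/-- `τ_w(τ_{c1}(τ_w(S)) − c1)` is the simple graph whose edges are
exactly the pairs `{c2, u}` with `u ∈ P1 \ {c1}` together with the pairs `{w, z}`
with `z ∈ P2 \ {w}`. -/
theorem stmt_18 {V : Type u} (P1 P2 : Set V) (hdisj : Disjoint P1 P2)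
    (c1 c2 : V) (hc1 : c1 ∈ P1) (hc2 : c2 ∈ P2) (w : V) (hw : w ∈ P2 \ {c2}) :
    localComp (delVert (localComp (localComp (binaryStar P1 P2 c1 c2) w) c1) c1) w =
      SimpleGraph.fromRel (fun a b =>
        (a = c2 ∧ b ∈ P1 \ {c1}) ∨ (a = w ∧ b ∈ P2 \ {w})) := by
  obtain ⟨hwP2, hwc2 : w ≠ c2⟩ := hw
  have hc1P2 : c1 ∉ P2 := Set.disjoint_left.1 hdisj hc1
  have hwc1 : w ≠ c1 := ne_of_mem_of_not_mem hwP2 hc1P2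
  set S := binaryStar P1 P2 c1 c2
  have hNw : S.neighborSet w = {c1} :=
    neighborSet_binaryStar_of_mem_right hwP2 (Set.disjoint_right.1 hdisj hwP2) hwc1 hwc2
  have hNc1 : S.neighborSet c1 = P2 := neighborSet_binaryStar_left_center hc1P2 hc2
  set H := delVert (S ⊔ completeOn P2) c1
  have hNwH : H.neighborSet w = P2 \ {w} := by
    rw [neighborSet_delVert _ hwc1, neighborSet_sup, hNw, neighborSet_completeOn hwP2,
      Set.union_sdiff_left, Set.sdiff_singleton_eq_self fun h => hc1P2 h.1]
  have hclique : H.IsClique (P2 \ {w}) :=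
    (((isClique_completeOn P2).mono le_sup_right).subset Set.sdiff_subset).delVert
      fun h => hc1P2 h.1
  have hτw : localComp S w = S :=
    localComp_eq_self_of_subsingleton (hNw ▸ Set.subsingleton_singleton)
  have hτc1 : localComp S c1 = S ⊔ completeOn P2 :=
    hNc1 ▸ localComp_eq_sup_of_isIndepSet (hNc1 ▸ isIndepSet_binaryStar_right hdisj hc1P2)
  rw [hτw, hτc1, localComp_eq_sdiff_of_isClique (hNwH ▸ hclique), hNwH]
  ext a b
  simp only [S, sdiff_adj, delVert_adj, sup_adj, completeOn_adj, binaryStar_adj, fromRel_adj,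
    Set.mem_sdiff, Set.mem_singleton_iff]
  grind
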